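/- Let K be the field of fractions of ℚ[x₀,x₁,x₂,x₃,x₄,x₅], set A = (x₂x₄+x₃x₅)/(x₀x₁), B = (x₁x₄+x₀x₅)/(x₂x₃), C = (x₀x₂+x₁x₃)/(x₄x₅), and let τ'₁, τ'₂, τ'₃ be the maps on K⁶ defined by: τ'₁ replaces (v₀,v₁) by ((v₂v₄+v₃v₅)/v₁, (v₂v₄+v₃v₅)/v₀); τ'₂ replaces (v₂,v₃) by ((v₁v₄+v₀v₅)/v₃, (v₁v₄+v₀v₅)/v₂); τ'₃ replaces (v₄,v₅) by ((v₀v₂+v₁v₃)/v₅, (v₀v₂+v₁v₃)/v₄); each fixes the remaining entries. For natural numbers s, t, let w be the word consisting of the block (1,2,3) repeated 2t times, then the letters (1,2), then the block (1,3,2) repeated 2s+1 times, and let v be the result of applying the maps to X = (x₀,…,x₅) in left-to-right order along w. Then v₀ = x₀·A^{3s²+3st+3t²+3s+3t+1}·B^{3s²+3st+3t²+4s+2t+1}·C^{3s²+3st+3t²+2s+t} and v₁ = x₁ times the same monomial in A, B, C. -/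

import Mathlib

noncomputable section

/-- The polynomial ring ℚ[x₀,…,x₅]. -/
abbrev P : Type := MvPolynomial (Fin 6) ℚ

/-- K = Frac(ℚ[x₀,…,x₅]). -/
abbrev K : Type := FractionRing P

/-- The images of the variables x₀,…,x₅ in K. -/
def x (i : Fin 6) : K := algebraMap P K (MvPolynomial.X i)

/-- τ'₁ : replaces (v₀, v₁) by ((v₂v₄+v₃v₅)/v₁, (v₂v₄+v₃v₅)/v₀). -/
def tau1 (v : Fin 6 → K) : Fin 6 → K := fun k =>
  if k = 0 then (v 2 * v 4 + v 3 * v 5) / v 1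
  else if k = 1 then (v 2 * v 4 + v 3 * v 5) / v 0
  else v k

/-- τ'₂ : replaces (v₂, v₃) by ((v₁v₄+v₀v₅)/v₃, (v₁v₄+v₀v₅)/v₂). -/
def tau2 (v : Fin 6 → K) : Fin 6 → K := fun k =>
  if k = 2 then (v 1 * v 4 + v 0 * v 5) / v 3
  else if k = 3 then (v 1 * v 4 + v 0 * v 5) / v 2
  else v k

/-- τ'₃ : replaces (v₄, v₅) by ((v₀v₂+v₁v₃)/v₅, (v₀v₂+v₁v₃)/v₄). -/
def tau3 (v : Fin 6 → K) : Fin 6 → K := fun k =>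
  if k = 4 then (v 0 * v 2 + v 1 * v 3) / v 5
  else if k = 5 then (v 0 * v 2 + v 1 * v 3) / v 4
  else v k

/-- τ' indexed by Fin 3: `tau i` is τ'_{i+1}. -/
def tau : Fin 3 → (Fin 6 → K) → (Fin 6 → K)
  | 0 => tau1
  | 1 => tau2
  | 2 => tau3

/-- The initial labeled seed X = (x₀,…,x₅). -/
def X0 : Fin 6 → K := x

/-- Apply the maps τ'₍a₁₎, …, τ'₍aₙ₎ along the word `w` in left-to-right order. -/
def applyWord (w : List (Fin 3)) (v : Fin 6 → K) : Fin 6 → K :=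
  w.foldl (fun u a => tau a u) v

/-- A = (x₂x₄+x₃x₅)/(x₀x₁). -/
def A : K := (x 2 * x 4 + x 3 * x 5) / (x 0 * x 1)

/-- B = (x₁x₄+x₀x₅)/(x₂x₃). -/
def B : K := (x 1 * x 4 + x 0 * x 5) / (x 2 * x 3)

/-- C = (x₀x₂+x₁x₃)/(x₄x₅). -/
def C : K := (x 0 * x 2 + x 1 * x 3) / (x 4 * x 5)

/-- The canonical path (123)^{2t} (12) (132)^{2s+1} to the odd alcove with
i = 6s+3, j = 3t+1 (letters 1,2,3 are encoded as 0,1,2 in `Fin 3`). -/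
def word11 (s t : ℕ) : List (Fin 3) :=
  (List.replicate (2 * t) ([0, 1, 2] : List (Fin 3))).flatten ++
    ([0, 1] : List (Fin 3)) ++
    (List.replicate (2 * s + 1) ([0, 2, 1] : List (Fin 3))).flatten

/-! Along the path every seed has the shape `(x₀m₀, x₁m₀, x₂m₁, x₃m₁, x₄m₂, x₅m₂)` with each `mᵢ`
a Laurent monomial in `A, B, C`. On such a seed the exchange binomial of τ'ᵢ₊₁ is the initial
one (`A x₀x₁`, `B x₂x₃` or `C x₄x₅`) times a monomial, so the seed keeps its shape and the
exponent vectors `eᵢ` of the `mᵢ` follow the integer recursion `eᵢ ↦ δᵢ + eᵢ₊₁ + eᵢ₊₂ - eᵢ`.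
The theorem then reduces to iterating this recursion along the blocks `(123)²` and `(132)²`,
whose effect on the exponents is quadratic in the number of blocks. -/

lemma x_ne_zero (k : Fin 6) : x k ≠ 0 := by
  simp only [x, ne_eq, map_eq_zero_iff _ (IsFractionRing.injective P K)]
  exact MvPolynomial.X_ne_zero k

lemma x_mul_add_x_mul_ne_zero (i j k l : Fin 6) : x i * x j + x k * x l ≠ 0 := by
  have hcast : x i * x j + x k * x l = algebraMap P K
      (MvPolynomial.X i * MvPolynomial.X j + MvPolynomial.X k * MvPolynomial.X l) := by
    simp [x]
  rw [hcast, ne_eq, map_eq_zero_iff _ (IsFractionRing.injective P K)]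
  intro h
  simpa using congrArg (MvPolynomial.eval fun _ => (1 : ℚ)) h

def coef : Fin 3 → K := ![A, B, C]

lemma coef_ne_zero (i : Fin 3) : coef i ≠ 0 := by
  fin_cases i <;>
    exact div_ne_zero (x_mul_add_x_mul_ne_zero _ _ _ _) (mul_ne_zero (x_ne_zero _) (x_ne_zero _))

def seedOf (m : Fin 3 → K) : Fin 6 → K := fun k => x k * m ⟨k / 2, by omega⟩

def mutate (i : Fin 3) (m : Fin 3 → K) : Fin 3 → K :=
  Function.update m i (coef i * m (i + 1) * m (i + 2) / m i)

theorem tau_seedOf (i : Fin 3) (m : Fin 3 → K) : tau i (seedOf m) = seedOf (mutate i m) := by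
  funext k
  fin_cases i <;> fin_cases k <;>
    simp [tau, tau1, tau2, tau3, seedOf, mutate, coef, A, B, C, Function.update] <;>
    field_simp [x_ne_zero]

def abcMonomial (e : Fin 3 → ℤ) : K := ∏ j, coef j ^ e j

lemma abcMonomial_zero : abcMonomial 0 = 1 := by simp [abcMonomial]

lemma abcMonomial_add (e f : Fin 3 → ℤ) :
    abcMonomial (e + f) = abcMonomial e * abcMonomial f := by
  simp only [abcMonomial, Pi.add_apply, zpow_add₀ (coef_ne_zero _), Finset.prod_mul_distrib]

lemma abcMonomial_sub (e f : Fin 3 → ℤ) :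
    abcMonomial (e - f) = abcMonomial e / abcMonomial f := by
  simp only [abcMonomial, Pi.sub_apply, zpow_sub₀ (coef_ne_zero _), Finset.prod_div_distrib]

lemma abcMonomial_single (i : Fin 3) : abcMonomial (Pi.single i 1) = coef i := by
  simp [abcMonomial, Pi.single_apply]

def mutateExponent (i : Fin 3) (E : Fin 3 → Fin 3 → ℤ) : Fin 3 → Fin 3 → ℤ :=
  Function.update E i (Pi.single i 1 + E (i + 1) + E (i + 2) - E i)

lemma mutate_abcMonomial_comp (i : Fin 3) (E : Fin 3 → Fin 3 → ℤ) :
    mutate i (abcMonomial ∘ E) = abcMonomial ∘ mutateExponent i E := by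
  rw [mutateExponent, Function.comp_update, mutate, abcMonomial_sub, abcMonomial_add,
    abcMonomial_add, abcMonomial_single]
  rfl

def applyWordExponent (w : List (Fin 3)) (E : Fin 3 → Fin 3 → ℤ) : Fin 3 → Fin 3 → ℤ :=
  w.foldl (fun E a => mutateExponent a E) E

lemma applyWordExponent_append (w₁ w₂ : List (Fin 3)) (E : Fin 3 → Fin 3 → ℤ) :
    applyWordExponent (w₁ ++ w₂) E = applyWordExponent w₂ (applyWordExponent w₁ E) :=
  List.foldl_append

theorem applyWord_seedOf_abcMonomial (w : List (Fin 3)) (E : Fin 3 → Fin 3 → ℤ) :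
    applyWord w (seedOf (abcMonomial ∘ E)) = seedOf (abcMonomial ∘ applyWordExponent w E) := by
  induction w generalizing E with
  | nil => rfl
  | cons a w ih =>
    simp only [applyWord, applyWordExponent, List.foldl_cons, tau_seedOf,
      mutate_abcMonomial_comp] at ih ⊢
    exact ih _

lemma X0_eq_seedOf : X0 = seedOf (abcMonomial ∘ 0) := by
  funext k
  simp [X0, seedOf, abcMonomial_zero]

def prefixExponent (t : ℤ) : Fin 3 → Fin 3 → ℤ :=
  ![![3 * t ^ 2, 3 * t ^ 2 - t, 3 * t ^ 2 - 2 * t],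
    ![3 * t ^ 2 + t, 3 * t ^ 2, 3 * t ^ 2 - t],
    ![3 * t ^ 2 + 2 * t, 3 * t ^ 2 + t, 3 * t ^ 2]]

theorem applyWordExponent_prefix (t : ℕ) :
    applyWordExponent (List.replicate (2 * t) ([0, 1, 2] : List (Fin 3))).flatten 0 =
      prefixExponent t := by
  induction t with
  | zero => ext i j; fin_cases i <;> fin_cases j <;> rfl
  | succ t ih =>
    rw [show 2 * (t + 1) = 2 * t + 2 by ring, List.replicate_add, List.flatten_append,
      applyWordExponent_append, ih]
    ext i j
    fin_cases i <;> fin_cases j <;>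
      simp [applyWordExponent, mutateExponent, prefixExponent,
        Matrix.vecHead, Matrix.vecTail] <;> ring

def word11Exponent (s t : ℤ) : Fin 3 → Fin 3 → ℤ :=
  ![![3 * s ^ 2 + 3 * s * t + 3 * t ^ 2 + 3 * s + 3 * t + 1,
      3 * s ^ 2 + 3 * s * t + 3 * t ^ 2 + 4 * s + 2 * t + 1,
      3 * s ^ 2 + 3 * s * t + 3 * t ^ 2 + 2 * s + t],
    ![3 * s ^ 2 + 3 * s * t + 3 * t ^ 2 + 5 * s + 4 * t + 2,
      3 * s ^ 2 + 3 * s * t + 3 * t ^ 2 + 6 * s + 3 * t + 3,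
      3 * s ^ 2 + 3 * s * t + 3 * t ^ 2 + 4 * s + 2 * t + 1],
    ![3 * s ^ 2 + 3 * s * t + 3 * t ^ 2 + 4 * s + 5 * t + 2,
      3 * s ^ 2 + 3 * s * t + 3 * t ^ 2 + 5 * s + 4 * t + 2,
      3 * s ^ 2 + 3 * s * t + 3 * t ^ 2 + 3 * s + 3 * t + 1]]

theorem applyWordExponent_word11 (s t : ℕ) :
    applyWordExponent (word11 s t) 0 = word11Exponent s t := by
  induction s with
  | zero =>
    rw [word11, applyWordExponent_append, applyWordExponent_append, applyWordExponent_prefix]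
    ext i j
    fin_cases i <;> fin_cases j <;>
      simp [applyWordExponent, mutateExponent, prefixExponent, word11Exponent,
        Matrix.vecHead, Matrix.vecTail] <;> ring
  | succ s ih =>
    have hw : word11 (s + 1) t = word11 s t ++ [0, 2, 1, 0, 2, 1] := by
      rw [word11, word11, show 2 * (s + 1) + 1 = (2 * s + 1) + 2 by ring,
        List.replicate_add, List.flatten_append, ← List.append_assoc]
      rfl
    rw [hw, applyWordExponent_append, ih]
    ext i j
    fin_cases i <;> fin_cases j <;>
      simp [applyWordExponent, mutateExponent, word11Exponent,
        Matrix.vecHead, Matrix.vecTail] <;> ring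

theorem alcove_odd_31 (s t : ℕ) :
    applyWord (word11 s t) X0 0 =
      x 0 * A ^ (3 * (s : ℤ) ^ 2 + 3 * s * t + 3 * t ^ 2 + 3 * s + 3 * t + 1)
          * B ^ (3 * (s : ℤ) ^ 2 + 3 * s * t + 3 * t ^ 2 + 4 * s + 2 * t + 1)
          * C ^ (3 * (s : ℤ) ^ 2 + 3 * s * t + 3 * t ^ 2 + 2 * s + t) ∧
    applyWord (word11 s t) X0 1 =
      x 1 * A ^ (3 * (s : ℤ) ^ 2 + 3 * s * t + 3 * t ^ 2 + 3 * s + 3 * t + 1)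
          * B ^ (3 * (s : ℤ) ^ 2 + 3 * s * t + 3 * t ^ 2 + 4 * s + 2 * t + 1)
          * C ^ (3 * (s : ℤ) ^ 2 + 3 * s * t + 3 * t ^ 2 + 2 * s + t) := by
  rw [X0_eq_seedOf, applyWord_seedOf_abcMonomial, applyWordExponent_word11]
  constructor <;>
    simp [seedOf, abcMonomial, Fin.prod_univ_three, coef, word11Exponent, mul_assoc]
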